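/- For positive integers n, q and p_1, …, p_q with p = Σ_{i=1}^q p_i < n − 1, define s_{n,q} = Σ_{i=1}^q (n − p_i − 3/2) log(1 − p_i/(n−1)) − (n − p − 3/2) log(1 − p/(n−1)), and define s_n = Σ_{i=1}^{q_n} (n − p_i − 1) log(1 − p_i/(n−1)) − (n − p − 1) log(1 − p/(n−1)) − σ^2/4 with σ^2 = 2 log((1−c)^{−1} Π_{i=1}^∞ (1 − λ_i)). If q_n → ∞, p_i/n → λ_i ∈ (0,1) for each fixed i, p/n → c < 1, and Σ_{i=1}^∞ λ_i = c, then s_n − s_{n, q_n} → 0 as n → ∞. -/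

import Mathlib

/-!
The two centerings differ by `(∑ᵢ log (1 - pᵢ/(n-1)) - log (1 - p/(n-1))) / 2`. The second
logarithm tends to `log (1 - c)`. For the sum, finitely many terms converge one by one, and since
the total mass `∑ᵢ pᵢ/(n-1)` tends to `∑ᵢ λᵢ`, the remaining terms carry small total mass, where
`log (1 - t) = O(t)`. Hence the sum tends to `∑ᵢ log (1 - λᵢ)`, and the limit of the difference
is exactly `σ²/4`.
-/

open Filter Finset Real
open scoped Topology

lemma sum_Icc_one_eq_sum_range_succ {M : Type*} [AddCommMonoid M] (g : ℕ → M) (m : ℕ) :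
    ∑ i ∈ Icc 1 m, g i = ∑ i ∈ range m, g (i + 1) := by
  rw [range_eq_Ico, sum_Ico_add' g 0 m 1, zero_add, Ico_add_one_right_eq_Icc]

lemma tendsto_div_natCast_sub_one {a : ℕ → ℝ} {l : ℝ}
    (h : Tendsto (fun n ↦ a n / n) atTop (𝓝 l)) :
    Tendsto (fun n ↦ a n / ((n : ℝ) - 1)) atTop (𝓝 l) := by
  have h' := h.mul (tendsto_natCast_div_add_atTop (-1 : ℝ))
  rw [mul_one] at h'
  refine h'.congr' ?_
  filter_upwards [eventually_ge_atTop 1] with n hn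
  have hn : (n : ℝ) ≠ 0 := by positivity
  rw [← sub_eq_add_neg, div_mul_div_cancel₀ hn]

lemma isBigO_log_one_sub : (fun t : ℝ ↦ log (1 - t)) =O[𝓝 0] id := by
  have h := ((hasDerivAt_id (0 : ℝ)).const_sub 1).log (by norm_num)
  have h' := h.isBigO_sub
  simp only [id, sub_zero, log_one] at h'
  exact h'

lemma norm_sum_comp_le_of_sum_lt {ι E : Type*} [SeminormedAddCommGroup E] {f : ℝ → E}
    {C δ : ℝ} {s : Finset ι} {y : ι → ℝ}
    (hf : ∀ t, dist t 0 < δ → ‖f t‖ ≤ C * ‖t‖)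
    (hy : ∀ i ∈ s, 0 ≤ y i) (hs : ∑ i ∈ s, y i < δ) :
    ‖∑ i ∈ s, f (y i)‖ ≤ C * ∑ i ∈ s, y i := by
  have hterm : ∀ i ∈ s, ‖f (y i)‖ ≤ C * y i := by
    intro i hi
    have hyi : dist (y i) 0 < δ := by
      simpa [abs_of_nonneg (hy i hi)] using (single_le_sum hy hi).trans_lt hs
    simpa [abs_of_nonneg (hy i hi)] using hf (y i) hyi
  calc ‖∑ i ∈ s, f (y i)‖ ≤ ∑ i ∈ s, ‖f (y i)‖ := norm_sum_le _ _
    _ ≤ ∑ i ∈ s, C * y i := sum_le_sum hterm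
    _ = C * ∑ i ∈ s, y i := (mul_sum _ _ _).symm

theorem tendsto_sum_range_comp_of_tendsto_sum {E : Type*} [NormedAddCommGroup E] [CompleteSpace E]
    {f : ℝ → E} {x : ℕ → ℕ → ℝ} {l : ℕ → ℝ} {c : ℝ} {q : ℕ → ℕ}
    (hf : f =O[𝓝 0] id) (hfl : ∀ i, ContinuousAt f (l i))
    (hq : Tendsto q atTop atTop) (hx₀ : ∀ᶠ n in atTop, ∀ i, 0 ≤ x n i)
    (hx : ∀ i, Tendsto (fun n ↦ x n i) atTop (𝓝 (l i)))
    (hl : HasSum l c) (hxs : Tendsto (fun n ↦ ∑ i ∈ range (q n), x n i) atTop (𝓝 c)) :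
    Tendsto (fun n ↦ ∑ i ∈ range (q n), f (x n i)) atTop (𝓝 (∑' i, f (l i))) := by
  obtain ⟨C, hC, hCf⟩ := hf.exists_pos
  obtain ⟨δ₀, hδ₀, hbound⟩ := Metric.eventually_nhds_iff.1 hCf.bound
  have hfl_sum : Tendsto (fun N ↦ ∑ i ∈ range N, f (l i)) atTop (𝓝 (∑' i, f (l i))) :=
    (hf.comp_summable hl.summable).hasSum.tendsto_sum_nat
  rw [Metric.tendsto_nhds]
  intro ε hε
  obtain ⟨δ₁, hδ₁, hCδ₁⟩ := exists_pos_mul_lt (by positivity : 0 < ε / 3) C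
  set δ := min δ₀ δ₁
  have hCδ : C * δ < ε / 3 := (mul_le_mul_of_nonneg_left (min_le_right _ _) hC.le).trans_lt hCδ₁
  obtain ⟨N, hN_f, hN_l⟩ := ((Metric.tendsto_nhds.1 hfl_sum (ε / 3) (by positivity)).and
    (hl.tendsto_sum_nat.eventually (eventually_gt_nhds
      (show c - δ < c by simp [δ, hδ₀, hδ₁])))).exists
  have hhead : Tendsto (fun n ↦ ∑ i ∈ range N, f (x n i)) atTop
      (𝓝 (∑ i ∈ range N, f (l i))) :=
    tendsto_finsetSum _ fun i _ ↦ (hfl i).tendsto.comp (hx i)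
  have htail : Tendsto (fun n ↦ ∑ i ∈ range (q n), x n i - ∑ i ∈ range N, x n i) atTop
      (𝓝 (c - ∑ i ∈ range N, l i)) :=
    hxs.sub (tendsto_finsetSum _ fun i _ ↦ hx i)
  filter_upwards [hx₀, hq.eventually_ge_atTop N,
    Metric.tendsto_nhds.1 hhead (ε / 3) (by positivity),
    htail.eventually (eventually_lt_nhds (show c - ∑ i ∈ range N, l i < δ by linarith))]
    with n hn_nonneg hNq hn_head hn_tail
  rw [← sum_range_add_sum_Ico _ hNq] at hn_tail ⊢
  have hsmall : ‖∑ i ∈ Ico N (q n), f (x n i)‖ ≤ C * ∑ i ∈ Ico N (q n), x n i :=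
    norm_sum_comp_le_of_sum_lt (fun t ht ↦ hbound (ht.trans_le (min_le_left _ _)))
      (fun i _ ↦ hn_nonneg i) (by linarith)
  have hCtail : C * ∑ i ∈ Ico N (q n), x n i ≤ C * δ :=
    mul_le_mul_of_nonneg_left (by linarith) hC.le
  rw [dist_eq_norm] at hn_head hN_f ⊢
  calc ‖∑ i ∈ range N, f (x n i) + ∑ i ∈ Ico N (q n), f (x n i) - ∑' i, f (l i)‖
      = ‖∑ i ∈ Ico N (q n), f (x n i) + (∑ i ∈ range N, f (x n i) - ∑ i ∈ range N, f (l i))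
          + (∑ i ∈ range N, f (l i) - ∑' i, f (l i))‖ := by congr 1; abel
    _ ≤ _ := norm_add₃_le
    _ < ε := by linarith

theorem centering_difference_limit_general
    (q : ℕ → ℕ) (p : ℕ → ℕ → ℕ) (lam : ℕ → ℝ) (c : ℝ)
    (hq : Tendsto q atTop atTop)
    (hlam : ∀ i, 1 ≤ i → lam i ∈ Set.Ioo (0 : ℝ) 1)
    (hpl : ∀ i, 1 ≤ i → Tendsto (fun n => (p n i : ℝ) / n) atTop (𝓝 (lam i)))
    (hc : c < 1)
    (hpn : Tendsto (fun n => ((∑ i ∈ Finset.Icc 1 (q n), p n i : ℕ) : ℝ) / n)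
      atTop (𝓝 c))
    (hsum : HasSum (fun i : ℕ => lam (i + 1)) c)
    (σ2 : ℝ) (hσ2 : σ2 = 2 * Real.log ((1 - c)⁻¹ * ∏' i : ℕ, (1 - lam (i + 1)))) :
    Tendsto (fun n =>
        -- s_n
        ((∑ i ∈ Finset.Icc 1 (q n),
            ((n : ℝ) - p n i - 1) * Real.log (1 - (p n i : ℝ) / ((n : ℝ) - 1)))
          - ((n : ℝ) - (∑ i ∈ Finset.Icc 1 (q n), p n i : ℕ) - 1)
            * Real.log (1 - ((∑ i ∈ Finset.Icc 1 (q n), p n i : ℕ) : ℝ) / ((n : ℝ) - 1))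
          - σ2 / 4)
        -- minus s_{n,q_n}
        - ((∑ i ∈ Finset.Icc 1 (q n),
            ((n : ℝ) - p n i - 3 / 2) * Real.log (1 - (p n i : ℝ) / ((n : ℝ) - 1)))
          - ((n : ℝ) - (∑ i ∈ Finset.Icc 1 (q n), p n i : ℕ) - 3 / 2)
            * Real.log (1 - ((∑ i ∈ Finset.Icc 1 (q n), p n i : ℕ) : ℝ) / ((n : ℝ) - 1))))
      atTop (𝓝 0) := by
  have hlam_one_sub i : 0 < 1 - lam (i + 1) := sub_pos.2 (hlam (i + 1) i.succ_pos).2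
  set S := ∑' i, log (1 - lam (i + 1))
  have hlogs : Tendsto (fun n ↦ ∑ i ∈ Icc 1 (q n), log (1 - (p n i : ℝ) / ((n : ℝ) - 1)))
      atTop (𝓝 S) := by
    simp only [sum_Icc_one_eq_sum_range_succ]
    refine tendsto_sum_range_comp_of_tendsto_sum (f := fun t ↦ log (1 - t))
      (x := fun n i ↦ (p n (i + 1) : ℝ) / ((n : ℝ) - 1)) isBigO_log_one_sub
      (fun i ↦ (continuousAt_const.sub continuousAt_id).log (hlam_one_sub i).ne') hq ?_
      (fun i ↦ tendsto_div_natCast_sub_one (hpl (i + 1) i.succ_pos)) hsum ?_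
    · filter_upwards [eventually_ge_atTop 1] with n hn i
      exact div_nonneg (Nat.cast_nonneg _) (sub_nonneg.2 (by exact_mod_cast hn))
    · simpa only [Nat.cast_sum, sum_div, sum_Icc_one_eq_sum_range_succ]
        using tendsto_div_natCast_sub_one hpn
  have hlog_total : Tendsto (fun n ↦ log (1 - ((∑ i ∈ Icc 1 (q n), p n i : ℕ) : ℝ) / ((n : ℝ) - 1)))
      atTop (𝓝 (log (1 - c))) :=
    (tendsto_const_nhds.sub (tendsto_div_natCast_sub_one hpn)).log (sub_pos.2 hc).ne'
  have hσ : (S - log (1 - c)) / 2 - σ2 / 4 = 0 := by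
    rw [hσ2, ← rexp_tsum_eq_tprod hlam_one_sub (isBigO_log_one_sub.comp_summable hsum.summable),
      log_mul (inv_ne_zero (sub_pos.2 hc).ne') (exp_ne_zero _), log_exp, log_inv]
    ring
  have hlim := ((hlogs.sub hlog_total).div_const 2).sub_const (σ2 / 4)
  rw [hσ] at hlim
  refine hlim.congr fun n ↦ ?_
  have hhalf : ∑ i ∈ Icc 1 (q n), ((n : ℝ) - p n i - 1) * log (1 - (p n i : ℝ) / ((n : ℝ) - 1))
      - ∑ i ∈ Icc 1 (q n), ((n : ℝ) - p n i - 3 / 2) * log (1 - (p n i : ℝ) / ((n : ℝ) - 1))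
      = (∑ i ∈ Icc 1 (q n), log (1 - (p n i : ℝ) / ((n : ℝ) - 1))) / 2 := by
    rw [← sum_sub_distrib, sum_div]
    exact sum_congr rfl fun _ _ ↦ by ring
  linear_combination -hhalf

/-- With
`s_{n,q} = ∑_{i=1}^q (n − p_i − 3/2) log(1 − p_i/(n−1)) − (n − p − 3/2) log(1 − p/(n−1))` and
`s_n = ∑_{i=1}^{q_n} (n − p_i − 1) log(1 − p_i/(n−1)) − (n − p − 1) log(1 − p/(n−1)) − σ²/4`,
where `σ² = 2 log((1−c)⁻¹ ∏_{i=1}^∞ (1 − λ_i))`, we have `s_n − s_{n,q_n} → 0`. -/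
theorem centering_difference_limit
    (q : ℕ → ℕ) (p : ℕ → ℕ → ℕ) (lam : ℕ → ℝ) (c : ℝ)
    (hpos : ∀ n, ∀ i ∈ Finset.Icc 1 (q n), 0 < p n i)
    -- p = ∑_{i=1}^{q_n} p_i < n − 1 (eventually)
    (hnp : ∀ᶠ n in atTop, (∑ i ∈ Finset.Icc 1 (q n), p n i) < n - 1)
    (hq : Tendsto q atTop atTop)
    (hlam : ∀ i, 1 ≤ i → lam i ∈ Set.Ioo (0 : ℝ) 1)
    (hpl : ∀ i, 1 ≤ i → Tendsto (fun n => (p n i : ℝ) / n) atTop (𝓝 (lam i)))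
    (hc : c < 1)
    (hpn : Tendsto (fun n => ((∑ i ∈ Finset.Icc 1 (q n), p n i : ℕ) : ℝ) / n)
      atTop (𝓝 c))
    (hsum : HasSum (fun i : ℕ => lam (i + 1)) c)
    (σ2 : ℝ) (hσ2 : σ2 = 2 * Real.log ((1 - c)⁻¹ * ∏' i : ℕ, (1 - lam (i + 1)))) :
    Tendsto (fun n =>
        -- s_n
        ((∑ i ∈ Finset.Icc 1 (q n),
            ((n : ℝ) - p n i - 1) * Real.log (1 - (p n i : ℝ) / ((n : ℝ) - 1)))
          - ((n : ℝ) - (∑ i ∈ Finset.Icc 1 (q n), p n i : ℕ) - 1)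
            * Real.log (1 - ((∑ i ∈ Finset.Icc 1 (q n), p n i : ℕ) : ℝ) / ((n : ℝ) - 1))
          - σ2 / 4)
        -- minus s_{n,q_n}
        - ((∑ i ∈ Finset.Icc 1 (q n),
            ((n : ℝ) - p n i - 3 / 2) * Real.log (1 - (p n i : ℝ) / ((n : ℝ) - 1)))
          - ((n : ℝ) - (∑ i ∈ Finset.Icc 1 (q n), p n i : ℕ) - 3 / 2)
            * Real.log (1 - ((∑ i ∈ Finset.Icc 1 (q n), p n i : ℕ) : ℝ) / ((n : ℝ) - 1))))
      atTop (𝓝 0) :=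
  centering_difference_limit_general q p lam c hq hlam hpl hc hpn hsum σ2 hσ2
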